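/- arXiv:2211.13468 — 5 statements merged into one kernel-verified Lean document; each statement's English description precedes it below -/
import Mathlib

section
/- Let m ∈ ℝ, c ∈ ℂ and R > 0, and let f and g be massive holomorphic with mass m on an open set containing the closed disk {z : |z−c| ≤ R}. Then ∮_{|z−c|=R} f(z)·g(z) dz = 4·i·m·∬_{|z−c|<R} Re( f(z)·conj(g(z)) ) dA(z), where the contour integral is over the positively oriented circle and dA is Lebesgue area measure on ℂ ≅ ℝ². In particular ∮_{|z−c|=R} f(z)·g(z) dz is purely imaginary. -/
open Complex MeasureTheory Topology
open Set

/-- The Wirtinger derivative `∂̄f = (∂_x f + i ∂_y f)/2`, computed from the real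
Fréchet derivative of `f : ℂ → ℂ`. -/
noncomputable def dbar (f : ℂ → ℂ) (z : ℂ) : ℂ :=
  (fderiv ℝ f z 1 + Complex.I * fderiv ℝ f z Complex.I) / 2

-- key linear algebra identity
lemma key_linear (D : ℂ →L[ℝ] ℂ) (u : ℂ) :
    I * D u - D (I * u) = (I * D 1 - D I) * (starRingEnd ℂ) u := by
  have h1 : u = u.re • (1:ℂ) + u.im • I := by
    apply Complex.ext <;> simp
  have h2 : I * u = (-u.im) • (1:ℂ) + u.re • I := by
    apply Complex.ext <;> simp [mul_comm]
  have h3 : (starRingEnd ℂ) u = (u.re:ℂ) - u.im * I := by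
    apply Complex.ext <;> simp
  rw [h3]
  nth_rewrite 1 [h1]
  rw [h2, map_add, map_add, _root_.map_smul, _root_.map_smul, _root_.map_smul, _root_.map_smul]
  simp only [real_smul, smul_eq_mul]
  push_cast
  linear_combination (↑u.im * D 1) * Complex.I_sq

-- dbar product rule
lemma dbar_mul {f g : ℂ → ℂ} {z : ℂ} (hf : DifferentiableAt ℝ f z)
    (hg : DifferentiableAt ℝ g z) :
    dbar (fun w => f w * g w) z = dbar f z * g z + f z * dbar g z := by
  have := fderiv_fun_mul hf hg
  simp only [dbar, this]
  simp [ContinuousLinearMap.add_apply, ContinuousLinearMap.smul_apply, smul_eq_mul]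
  ring

open intervalIntegral in
lemma green {c : ℂ} {R : ℝ} (hR : 0 < R) {U : Set ℂ} (hU : IsOpen U)
    (hUR : Metric.closedBall c R ⊆ U) {h : ℂ → ℂ} (hh : ContDiffOn ℝ 1 h U) :
    (∮ z in C(c, R), h z) =
      ∫ p in Icc ((0:ℝ),(0:ℝ)) (R, 2*Real.pi),
        2 * I * p.1 * dbar h (c + p.1 * Complex.exp (p.2 * I)) := by
  have hπ := Real.pi_pos
  set φ : ℝ × ℝ → ℂ := fun p => c + p.1 * Complex.exp (p.2 * I) with hφdef
  set F : ℝ × ℝ → ℂ := fun p => h (φ p) * (p.1 * Complex.exp (p.2 * I) * I) with hFdef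
  set G : ℝ × ℝ → ℂ := fun p => -(h (φ p) * Complex.exp (p.2 * I)) with hGdef
  have hφU : ∀ p : ℝ × ℝ, |p.1| ≤ R → φ p ∈ U := by
    intro p hp
    apply hUR
    simp only [Metric.mem_closedBall, hφdef, dist_eq, add_sub_cancel_left]
    rwa [norm_mul, Complex.norm_real, Real.norm_eq_abs, norm_exp_ofReal_mul_I, mul_one]
  -- differentiability and derivative values
  have key : ∀ p : ℝ × ℝ, φ p ∈ U →
      DifferentiableAt ℝ F p ∧ DifferentiableAt ℝ G p ∧
      fderiv ℝ F p (1, 0) + fderiv ℝ G p (0, 1)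
        = 2 * I * p.1 * dbar h (φ p) := by
    intro p hp
    have hD : HasFDerivAt h (fderiv ℝ h (φ p)) (φ p) :=
      ((hh.contDiffAt (hU.mem_nhds hp)).differentiableAt one_ne_zero).hasFDerivAt
    set D := fderiv ℝ h (φ p) with hDdef
    have h1 : HasFDerivAt (fun q : ℝ × ℝ => (q.1 : ℂ))
        (Complex.ofRealCLM.comp (ContinuousLinearMap.fst ℝ ℝ ℝ)) p :=
      (Complex.ofRealCLM.comp (ContinuousLinearMap.fst ℝ ℝ ℝ)).hasFDerivAt
    have h2 : HasFDerivAt (fun q : ℝ × ℝ => ((q.2 : ℂ) * I))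
        (I • Complex.ofRealCLM.comp (ContinuousLinearMap.snd ℝ ℝ ℝ)) p :=
      (Complex.ofRealCLM.comp (ContinuousLinearMap.snd ℝ ℝ ℝ)).hasFDerivAt.mul_const I
    have h3 := h2.cexp
    have h4 := h1.mul h3
    have hφ' := h4.const_add c
    have hFd : HasFDerivAt F _ p := (hD.comp p hφ').mul (h4.mul_const I)
    have hGd : HasFDerivAt G _ p := ((hD.comp p hφ').mul h3).neg
    refine ⟨hFd.differentiableAt, hGd.differentiableAt, ?_⟩
    rw [hFd.fderiv, hGd.fderiv]
    simp only [ContinuousLinearMap.add_apply, ContinuousLinearMap.smul_apply,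
      ContinuousLinearMap.comp_apply, ContinuousLinearMap.smulRight_apply,
      ContinuousLinearMap.coe_fst', ContinuousLinearMap.coe_snd',
      ContinuousLinearMap.neg_apply, Complex.ofRealCLM_apply, smul_eq_mul,
      Complex.ofReal_zero, Complex.ofReal_one, mul_zero, zero_add, mul_one, add_zero, zero_mul]
    have hmc : Complex.exp (↑p.2 * I) * I = I * Complex.exp (↑p.2 * I) := mul_comm _ _
    rw [hmc, show ((p.1:ℂ) * (I * Complex.exp (↑p.2 * I))) = p.1 • (I * Complex.exp (↑p.2 * I)) from
      (Complex.real_smul ..).symm.trans rfl, _root_.map_smul D]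
    have hkl := key_linear D (Complex.exp (↑p.2 * I))
    have huu : Complex.exp (↑p.2 * I) * (starRingEnd ℂ) (Complex.exp (↑p.2 * I)) = 1 := by
      rw [Complex.mul_conj, ← Complex.sq_norm, norm_exp_ofReal_mul_I]
      norm_num
    simp only [dbar, ← hDdef, smul_eq_mul, Complex.real_smul]
    linear_combination (↑p.1 * Complex.exp (↑p.2 * I)) * hkl
      + (↑p.1 * (I * D 1 - D I)) * huu + (-(p.1:ℂ) * D I) * Complex.I_sq
  have hle : ((0:ℝ),(0:ℝ)) ≤ ((R:ℝ), 2*Real.pi) := ⟨hR.le, by positivity⟩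
  have hmem : ∀ p ∈ Icc ((0:ℝ),(0:ℝ)) (R, 2*Real.pi), φ p ∈ U := by
    intro p hp
    exact hφU p (by rw [_root_.abs_of_nonneg hp.1.1]; exact hp.2.1)
  have hcφ : Continuous φ := by fun_prop
  have hmaps : MapsTo φ (Icc ((0:ℝ),(0:ℝ)) (R, 2*Real.pi)) U := hmem
  have HcF : ContinuousOn F (Icc ((0:ℝ),(0:ℝ)) (R, 2*Real.pi)) :=
    (hh.continuousOn.comp hcφ.continuousOn hmaps).mul (by fun_prop)
  have HcG : ContinuousOn G (Icc ((0:ℝ),(0:ℝ)) (R, 2*Real.pi)) :=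
    ((hh.continuousOn.comp hcφ.continuousOn hmaps).mul (by fun_prop)).neg
  have hsub : ∀ x : ℝ × ℝ, x ∈ Ioo (0:ℝ) R ×ˢ Ioo (0:ℝ) (2*Real.pi) \ (∅ : Set (ℝ×ℝ)) →
      φ x ∈ U := by
    intro x hx
    obtain ⟨⟨h1, h2⟩, -⟩ := hx
    exact hφU x (by rw [_root_.abs_of_nonneg h1.1.le]; exact h1.2.le)
  have Hdf : ∀ x ∈ Ioo (0:ℝ) R ×ˢ Ioo (0:ℝ) (2*Real.pi) \ (∅ : Set (ℝ×ℝ)),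
      HasFDerivAt F (fderiv ℝ F x) x := fun x hx => ((key x (hsub x hx)).1).hasFDerivAt
  have Hdg : ∀ x ∈ Ioo (0:ℝ) R ×ˢ Ioo (0:ℝ) (2*Real.pi) \ (∅ : Set (ℝ×ℝ)),
      HasFDerivAt G (fderiv ℝ G x) x := fun x hx => ((key x (hsub x hx)).2.1).hasFDerivAt
  have hdeq : EqOn (fun x : ℝ×ℝ => fderiv ℝ F x (1,0) + fderiv ℝ G x (0,1))
      (fun x : ℝ×ℝ => 2 * I * x.1 * dbar h (φ x)) (Icc ((0:ℝ),(0:ℝ)) (R, 2*Real.pi)) :=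
    fun p hp => (key p (hmem p hp)).2.2
  have hfc : ContinuousOn (fderiv ℝ h) U := hh.continuousOn_fderiv_of_isOpen hU le_rfl
  have hdbar : ContinuousOn (dbar h) U := by
    unfold dbar
    exact ((hfc.clm_apply continuousOn_const).add
      (continuousOn_const.mul (hfc.clm_apply continuousOn_const))).div_const 2
  have hcont2 : ContinuousOn (fun x : ℝ×ℝ => 2 * I * x.1 * dbar h (φ x))
      (Icc ((0:ℝ),(0:ℝ)) (R, 2*Real.pi)) := by
    refine ContinuousOn.mul ?_ (hdbar.comp hcφ.continuousOn hmaps)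
    fun_prop
  have Hi : IntegrableOn (fun x : ℝ×ℝ => fderiv ℝ F x (1,0) + fderiv ℝ G x (0,1))
      (Icc ((0:ℝ),(0:ℝ)) (R, 2*Real.pi)) :=
    ((hcont2.integrableOn_compact isCompact_Icc)).congr_fun hdeq.symm measurableSet_Icc
  have HDIV := MeasureTheory.integral_divergence_prod_Icc_of_hasFDerivAt_off_countable_of_le
    F G (fderiv ℝ F) (fderiv ℝ G) ((0:ℝ),(0:ℝ)) (R, 2*Real.pi) hle ∅ countable_empty
    HcF HcG Hdf Hdg Hi
  have hG2 : ∀ x : ℝ, G (x, 2*Real.pi) = G (x, 0) := by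
    have hexp : Complex.exp ((2*Real.pi : ℝ) * I) = 1 := by
      push_cast; exact Complex.exp_two_pi_mul_I
    intro x
    simp [hGdef, hφdef, hexp]
  have hF0 : ∀ y : ℝ, F ((0:ℝ), y) = 0 := by
    intro y; simp [hFdef]
  have hcirc : (∮ z in C(c, R), h z) = ∫ y in (0:ℝ)..(2*Real.pi), F (R, y) := by
    refine intervalIntegral.integral_congr fun θ _ => ?_
    simp only [deriv_circleMap, circleMap, hFdef, hφdef, smul_eq_mul, zero_add]
    ring
  rw [hcirc, ← MeasureTheory.setIntegral_congr_fun measurableSet_Icc hdeq, HDIV]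
  rw [intervalIntegral.integral_congr (g := fun x : ℝ => G (x,0)) (fun x _ => hG2 x)]
  simp [hF0]
lemma polar {c : ℂ} {R : ℝ} (hR : 0 < R) {ρ : ℂ → ℝ}
    (hρ : ContinuousOn ρ (Metric.closedBall c R)) :
    (∫ p in Icc ((0:ℝ),(0:ℝ)) (R, 2*Real.pi), p.1 * ρ (c + p.1 * Complex.exp (p.2 * I)))
      = ∫ z in Metric.ball c R, ρ z := by
  have hπ := Real.pi_pos
  set q : ℝ × ℝ → ℝ := fun p => p.1 * ρ (c + p.1 * Complex.exp (p.2 * I)) with hq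
  have habs : ∀ p : ℝ × ℝ, ‖(p.1 * Complex.exp (p.2 * I) : ℂ)‖ = |p.1| := by
    intro p; rw [norm_mul, Complex.norm_real, Real.norm_eq_abs, norm_exp_ofReal_mul_I, mul_one]
  have hqc : ContinuousOn q {p : ℝ × ℝ | |p.1| ≤ R} := by
    refine ContinuousOn.mul (by fun_prop) ?_
    refine hρ.comp (Continuous.continuousOn (by fun_prop)) ?_
    intro p hp
    simp only [Metric.mem_closedBall, Complex.dist_eq, add_sub_cancel_left]
    rw [habs]; exact hp
  -- integrability on rectangles
  have hint : ∀ a b : ℝ, IntegrableOn q (Icc (0:ℝ) R ×ˢ Icc a b) := by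
    intro a b
    refine (hqc.mono ?_).integrableOn_compact (isCompact_Icc.prod isCompact_Icc)
    rintro ⟨x, y⟩ ⟨hx, -⟩
    simp only [mem_setOf_eq]
    rw [_root_.abs_of_nonneg hx.1]; exact hx.2
  -- periodicity in second variable
  have hper : ∀ x : ℝ, Function.Periodic (fun y => q (x, y)) (2*Real.pi) := by
    intro x y
    have : Complex.exp ((y + 2*Real.pi : ℝ) * I) = Complex.exp ((y:ℝ) * I) := by
      push_cast
      rw [add_mul, Complex.exp_add, Complex.exp_two_pi_mul_I, mul_one]
    simp only [hq, this]
  have key : ∀ x : ℝ, (∫ y in Icc (0:ℝ) (2*Real.pi), q (x, y))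
      = ∫ y in Icc (-Real.pi) Real.pi, q (x, y) := by
    intro x
    rw [integral_Icc_eq_integral_Ioc, integral_Icc_eq_integral_Ioc,
      ← intervalIntegral.integral_of_le (by linarith), ← intervalIntegral.integral_of_le
        (by linarith : -Real.pi ≤ Real.pi)]
    have := (hper x).intervalIntegral_add_eq 0 (-Real.pi)
    rw [zero_add] at this
    rw [this, show -Real.pi + 2*Real.pi = Real.pi by ring]
  have hσ : ∀ p : ℝ × ℝ, Complex.polarCoord.symm p = p.1 * Complex.exp (p.2 * I) := by
    intro p
    rw [Complex.polarCoord_symm_apply, Complex.exp_mul_I]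
    push_cast
    ring
  have hσc : Continuous fun p : ℝ × ℝ => Complex.polarCoord.symm p := by
    simp only [hσ]; fun_prop
  set g : ℂ → ℝ := fun w => ρ (c + w) with hg
  set T : Set (ℝ × ℝ) := {p : ℝ × ℝ | Complex.polarCoord.symm p ∈ Metric.ball (0:ℂ) R} with hT
  have hTm : MeasurableSet T := measurableSet_ball.preimage hσc.measurable
  have htarget : MeasurableSet polarCoord.target := by
    rw [polarCoord_target]
    exact (measurableSet_Ioi.prod measurableSet_Ioo)
  have hseteq : polarCoord.target ∩ T = Ioo (0:ℝ) R ×ˢ Ioo (-Real.pi) Real.pi := by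
    ext ⟨x, y⟩
    simp only [polarCoord_target, hT, mem_inter_iff, mem_prod, mem_Ioi, mem_Ioo, mem_setOf_eq,
      Metric.mem_ball, dist_zero_right, Complex.norm_polarCoord_symm]
    constructor
    · rintro ⟨⟨hx, hy⟩, hxR⟩
      rw [_root_.abs_of_pos hx] at hxR
      exact ⟨⟨hx, hxR⟩, hy⟩
    · rintro ⟨⟨hx1, hx2⟩, hy⟩
      exact ⟨⟨hx1, hy⟩, by rwa [_root_.abs_of_pos hx1]⟩
  have hR2 : (∫ z in Metric.ball c R, ρ z)
      = ∫ x in Ioo (0:ℝ) R, ∫ y in Ioo (-Real.pi) Real.pi, q (x, y) := by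
    calc ∫ z in Metric.ball c R, ρ z
        = ∫ z, (Metric.ball c R).indicator ρ z := (integral_indicator Metric.isOpen_ball.measurableSet).symm
      _ = ∫ z, (Metric.ball c R).indicator ρ (c + z) := (integral_add_left_eq_self _ c).symm
      _ = ∫ z, (Metric.ball (0:ℂ) R).indicator g z := by
          refine integral_congr_ae (Filter.Eventually.of_forall fun z => ?_)
          show (Metric.ball c R).indicator ρ (c + z) = (Metric.ball (0:ℂ) R).indicator g z
          by_cases hz : z ∈ Metric.ball (0:ℂ) R
          · rw [indicator_of_mem hz,
              indicator_of_mem (by simpa [Metric.mem_ball, Complex.dist_eq] using hz)]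
          · rw [indicator_of_notMem hz,
              indicator_of_notMem (by simpa [Metric.mem_ball, Complex.dist_eq] using hz)]
      _ = ∫ p in polarCoord.target, p.1 • (Metric.ball (0:ℂ) R).indicator g
            (Complex.polarCoord.symm p) := (Complex.integral_comp_polarCoord_symm _).symm
      _ = ∫ p in polarCoord.target, T.indicator (fun p : ℝ × ℝ => p.1 • g
            (Complex.polarCoord.symm p)) p := by
          refine setIntegral_congr_fun htarget fun p _ => ?_
          by_cases hp : p ∈ T
          · rw [indicator_of_mem hp, indicator_of_mem (by exact hp)]
          · rw [indicator_of_notMem (by exact hp), indicator_of_notMem hp, smul_zero]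
      _ = ∫ p in polarCoord.target ∩ T, p.1 • g (Complex.polarCoord.symm p) := by
          rw [setIntegral_indicator hTm]
      _ = ∫ p in Ioo (0:ℝ) R ×ˢ Ioo (-Real.pi) Real.pi, q p := by
          rw [hseteq]
          refine setIntegral_congr_fun ((measurableSet_Ioo.prod measurableSet_Ioo)) fun p _ => ?_
          simp only [hσ, hg, hq, smul_eq_mul]
      _ = ∫ x in Ioo (0:ℝ) R, ∫ y in Ioo (-Real.pi) Real.pi, q (x, y) := by
          rw [Measure.volume_eq_prod]
          refine setIntegral_prod _ ?_
          rw [← Measure.volume_eq_prod]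
          exact (hint (-Real.pi) Real.pi).mono_set
            (Set.prod_mono Ioo_subset_Icc_self Ioo_subset_Icc_self)
  have hL : (∫ p in Icc ((0:ℝ),(0:ℝ)) (R, 2*Real.pi), q p)
      = ∫ x in Icc (0:ℝ) R, ∫ y in Icc (0:ℝ) (2*Real.pi), q (x, y) := by
    rw [Icc_prod_eq, Measure.volume_eq_prod]
    refine setIntegral_prod _ ?_
    rw [← Measure.volume_eq_prod]
    exact hint 0 (2*Real.pi)
  rw [hL, hR2]
  simp only [key]
  rw [integral_Icc_eq_integral_Ioo]
  refine setIntegral_congr_fun measurableSet_Ioo fun x _ => ?_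
  rw [integral_Icc_eq_integral_Ioo]

/-- `f` is massive holomorphic with mass `m` on `U`: continuously real-differentiable
on `U` and `∂̄f = m·conj f` on `U`. -/
def MassiveHolomorphicOn (m : ℝ) (f : ℂ → ℂ) (U : Set ℂ) : Prop :=
  ContDiffOn ℝ 1 f U ∧ ∀ z ∈ U, dbar f z = m * (starRingEnd ℂ) (f z)

/-- Green–Riemann identity for massive holomorphic functions on a disk:
`∮_{|z−c|=R} f·g dz = 4·i·m·∬_{|z−c|<R} Re(f·conj g) dA`; in particular the contour
integral is purely imaginary. -/
theorem stmt0 (m : ℝ) (c : ℂ) (R : ℝ) (hR : 0 < R) (U : Set ℂ) (hU : IsOpen U)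
    (hUR : Metric.closedBall c R ⊆ U) (f g : ℂ → ℂ)
    (hf : MassiveHolomorphicOn m f U) (hg : MassiveHolomorphicOn m g U) :
    (∮ z in C(c, R), f z * g z) =
      4 * Complex.I * (m : ℂ) *
        ((∫ z in Metric.ball c R, (f z * (starRingEnd ℂ) (g z)).re : ℝ) : ℂ) ∧
    (∮ z in C(c, R), f z * g z).re = 0 := by
  obtain ⟨hf1, hf2⟩ := hf
  obtain ⟨hg1, hg2⟩ := hg
  set h : ℂ → ℂ := fun z => f z * g z with hhdef
  set ρ : ℂ → ℝ := fun z => (f z * (starRingEnd ℂ) (g z)).re with hρdef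
  have hh : ContDiffOn ℝ 1 h U := hf1.mul hg1
  have hdb : ∀ z ∈ U, dbar h z = ((2 * m * ρ z : ℝ) : ℂ) := by
    intro z hz
    have hfd : DifferentiableAt ℝ f z := (hf1.contDiffAt (hU.mem_nhds hz)).differentiableAt one_ne_zero
    have hgd : DifferentiableAt ℝ g z := (hg1.contDiffAt (hU.mem_nhds hz)).differentiableAt one_ne_zero
    rw [hhdef, dbar_mul hfd hgd, hf2 z hz, hg2 z hz]
    have hc := Complex.add_conj (f z * (starRingEnd ℂ) (g z))
    rw [map_mul, Complex.conj_conj] at hc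
    push_cast at hc ⊢
    linear_combination (m : ℂ) * hc
  have hρc : ContinuousOn ρ (Metric.closedBall c R) := by
    refine Complex.continuous_re.comp_continuousOn ?_
    exact ((hf1.continuousOn.mono hUR).mul
      ((Complex.continuous_conj.comp_continuousOn (hg1.continuousOn.mono hUR))))
  have hmem : ∀ p ∈ Icc ((0:ℝ),(0:ℝ)) ((R:ℝ), 2*Real.pi),
      c + (p.1:ℂ) * Complex.exp ((p.2:ℂ) * I) ∈ U := by
    intro p hp
    apply hUR
    simp only [Metric.mem_closedBall, Complex.dist_eq, add_sub_cancel_left]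
    rw [norm_mul, Complex.norm_real, Real.norm_eq_abs, norm_exp_ofReal_mul_I, mul_one, _root_.abs_of_nonneg hp.1.1]
    exact hp.2.1
  have hfirst : (∮ z in C(c, R), f z * g z)
      = 4 * Complex.I * (m : ℂ) * ((∫ z in Metric.ball c R, ρ z : ℝ) : ℂ) := by
    calc (∮ z in C(c, R), f z * g z) = ∮ z in C(c, R), h z := rfl
      _ = ∫ p in Icc ((0:ℝ),(0:ℝ)) (R, 2*Real.pi),
            2 * I * p.1 * dbar h (c + p.1 * Complex.exp (p.2 * I)) := green hR hU hUR hh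
      _ = ∫ p in Icc ((0:ℝ),(0:ℝ)) (R, 2*Real.pi),
            (4 * Complex.I * (m:ℂ)) * ((p.1 * ρ (c + p.1 * Complex.exp (p.2 * I)) : ℝ) : ℂ) := by
          refine setIntegral_congr_fun measurableSet_Icc fun p hp => ?_
          rw [hdb _ (hmem p hp)]
          push_cast
          ring
      _ = (4 * Complex.I * (m:ℂ)) * ∫ p in Icc ((0:ℝ),(0:ℝ)) (R, 2*Real.pi),
            ((p.1 * ρ (c + p.1 * Complex.exp (p.2 * I)) : ℝ) : ℂ) := by
          rw [MeasureTheory.integral_const_mul]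
      _ = (4 * Complex.I * (m:ℂ)) * ((∫ p in Icc ((0:ℝ),(0:ℝ)) (R, 2*Real.pi),
            p.1 * ρ (c + p.1 * Complex.exp (p.2 * I)) : ℝ) : ℂ) := by
          congr 1
          exact integral_ofReal
      _ = 4 * Complex.I * (m : ℂ) * ((∫ z in Metric.ball c R, ρ z : ℝ) : ℂ) := by
          rw [polar hR hρc]
  refine ⟨hfirst, ?_⟩
  rw [hfirst]
  have : 4 * Complex.I * (m:ℂ) * ((∫ z in Metric.ball c R, ρ z : ℝ) : ℂ)
      = ((4 * m * (∫ z in Metric.ball c R, ρ z) : ℝ) : ℂ) * Complex.I := by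
    push_cast; ring
  rw [this]
  simp
end

section
/- Let m ∈ ℝ, let U ⊆ ℂ be open, and let f : U → ℂ be twice continuously differentiable and massive holomorphic with mass m on U. Then for all z ∈ U: Δ(|f|²)(z) = 8·m²·|f(z)|² + 2·|∇(Re f)(z)|² + 2·|∇(Im f)(z)|², where Δ = ∂²_x + ∂²_y is the Laplacian and ∇ is the gradient with respect to the real coordinates of ℂ ≅ ℝ². In particular Δ(|f|²) ≥ 0, i.e. |f|² is subharmonic on U. -/
open Complex Topology

/-- The Laplacian `Δu = ∂²_x u + ∂²_y u` of a real-valued function on `ℂ ≅ ℝ²`. -/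
noncomputable def lap (u : ℂ → ℝ) (z : ℂ) : ℝ :=
  fderiv ℝ (fun w => fderiv ℝ u w 1) z 1 +
    fderiv ℝ (fun w => fderiv ℝ u w Complex.I) z Complex.I

/-- The squared norm of the gradient of a real-valued function on `ℂ ≅ ℝ²`:
`|∇u|² = (∂_x u)² + (∂_y u)²`. -/
noncomputable def gradSq (u : ℂ → ℝ) (z : ℂ) : ℝ :=
  (fderiv ℝ u z 1) ^ 2 + (fderiv ℝ u z Complex.I) ^ 2

private lemma fderiv_snd_apply {u : ℂ → ℝ} {z : ℂ} (h : DifferentiableAt ℝ (fderiv ℝ u) z)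
    (e e' : ℂ) :
    fderiv ℝ (fun w => fderiv ℝ u w e) z e' = fderiv ℝ (fderiv ℝ u) z e' e := by
  rw [fderiv_clm_apply h (differentiableAt_const e)]
  simp

/-- For `f` twice continuously differentiable and massive holomorphic with mass `m`
on an open `U`: `Δ(|f|²) = 8m²|f|² + 2|∇(Re f)|² + 2|∇(Im f)|²` on `U`; in
particular `Δ(|f|²) ≥ 0`, i.e. `|f|²` is subharmonic. -/
theorem stmt11 (m : ℝ) (U : Set ℂ) (hU : IsOpen U) (f : ℂ → ℂ)
    (hf2 : ContDiffOn ℝ 2 f U) (hf : MassiveHolomorphicOn m f U) :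
    ∀ z ∈ U,
      lap (fun w => ‖f w‖ ^ 2) z =
        8 * m ^ 2 * ‖f z‖ ^ 2 +
          2 * gradSq (fun w => (f w).re) z + 2 * gradSq (fun w => (f w).im) z ∧
      0 ≤ lap (fun w => ‖f w‖ ^ 2) z := by
  intro z hz
  have hz' : U ∈ 𝓝 z := hU.mem_nhds hz
  set g : ℂ → ℝ := fun w => ‖f w‖ ^ 2 with hg_def
  set u : ℂ → ℝ := fun w => (f w).re with hu_def
  set v : ℂ → ℝ := fun w => (f w).im with hv_def
  have hucomp : u = ⇑Complex.reCLM ∘ f := by funext w; simp [hu_def]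
  have hvcomp : v = ⇑Complex.imCLM ∘ f := by funext w; simp [hv_def]
  have hcf : ∀ w ∈ U, ContDiffAt ℝ 2 f w := fun w hw => hf2.contDiffAt (hU.mem_nhds hw)
  have hdf : ∀ w ∈ U, DifferentiableAt ℝ f w := fun w hw =>
    (hcf w hw).differentiableAt two_ne_zero
  have hcu : ∀ w ∈ U, ContDiffAt ℝ 2 u w := fun w hw => by
    rw [hucomp]; exact Complex.reCLM.contDiff.contDiffAt.comp w (hcf w hw)
  have hcv : ∀ w ∈ U, ContDiffAt ℝ 2 v w := fun w hw => by
    rw [hvcomp]; exact Complex.imCLM.contDiff.contDiffAt.comp w (hcf w hw)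
  have hdu : ∀ w ∈ U, DifferentiableAt ℝ u w := fun w hw =>
    (hcu w hw).differentiableAt two_ne_zero
  have hdv : ∀ w ∈ U, DifferentiableAt ℝ v w := fun w hw =>
    (hcv w hw).differentiableAt two_ne_zero
  have hfu : ∀ w ∈ U, ∀ e, fderiv ℝ u w e = (fderiv ℝ f w e).re := by
    intro w hw e
    rw [hucomp, fderiv_comp w Complex.reCLM.differentiableAt (hdf w hw),
      Complex.reCLM.fderiv]
    simp
  have hfv : ∀ w ∈ U, ∀ e, fderiv ℝ v w e = (fderiv ℝ f w e).im := by
    intro w hw e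
    rw [hvcomp, fderiv_comp w Complex.imCLM.differentiableAt (hdf w hw),
      Complex.imCLM.fderiv]
    simp
  -- the massive Cauchy--Riemann equations
  have key : ∀ w ∈ U, fderiv ℝ u w 1 = fderiv ℝ v w Complex.I + 2*m*u w ∧
      fderiv ℝ u w Complex.I = -fderiv ℝ v w 1 - 2*m*v w := by
    intro w hw
    have h := hf.2 w hw
    rw [dbar, div_eq_iff (by norm_num : (2:ℂ) ≠ 0)] at h
    have hre := congrArg Complex.re h
    have him := congrArg Complex.im h
    simp [Complex.add_re, Complex.add_im, Complex.mul_re, Complex.mul_im] at hre him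
    rw [hfu w hw, hfv w hw, hfu w hw, hfv w hw]
    simp only [hu_def, hv_def]
    constructor <;> nlinarith [hre, him]
  -- data at the point z
  obtain ⟨K1z, K2z⟩ := key z hz
  have hDu : DifferentiableAt ℝ (fderiv ℝ u) z :=
    ((hcu z hz).fderiv_right (m := 1) (by norm_num)).differentiableAt one_ne_zero
  have hDv : DifferentiableAt ℝ (fderiv ℝ v) z :=
    ((hcv z hz).fderiv_right (m := 1) (by norm_num)).differentiableAt one_ne_zero
  have due : ∀ e : ℂ, DifferentiableAt ℝ (fun w => fderiv ℝ u w e) z := fun e =>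
    hDu.clm_apply (differentiableAt_const e)
  have dve : ∀ e : ℂ, DifferentiableAt ℝ (fun w => fderiv ℝ v w e) z := fun e =>
    hDv.clm_apply (differentiableAt_const e)
  have hsymu : IsSymmSndFDerivAt ℝ u z := (hcu z hz).isSymmSndFDerivAt (by norm_num)
  have hsymv : IsSymmSndFDerivAt ℝ v z := (hcv z hz).isSymmSndFDerivAt (by norm_num)
  -- eventual identities
  have E1 : (fun w => fderiv ℝ u w 1) =ᶠ[𝓝 z]
      fun w => fderiv ℝ v w Complex.I + 2*m*u w := by
    filter_upwards [hz'] with w hw using (key w hw).1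
  have E2 : (fun w => fderiv ℝ u w Complex.I) =ᶠ[𝓝 z]
      fun w => -fderiv ℝ v w 1 - 2*m*v w := by
    filter_upwards [hz'] with w hw using (key w hw).2
  have E3 : (fun w => fderiv ℝ v w Complex.I) =ᶠ[𝓝 z]
      fun w => fderiv ℝ u w 1 - 2*m*u w := by
    filter_upwards [hz'] with w hw
    have := (key w hw).1; linarith
  have E4 : (fun w => fderiv ℝ v w 1) =ᶠ[𝓝 z]
      fun w => -fderiv ℝ u w Complex.I - 2*m*v w := by
    filter_upwards [hz'] with w hw
    have := (key w hw).2; linarith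
  -- Laplacians of u and v
  have hAu : lap u z = 4*m^2*u z := by
    unfold lap
    rw [E1.fderiv_eq, E2.fderiv_eq,
      fderiv_fun_add (dve Complex.I) ((hdu z hz).const_mul (2*m)),
      fderiv_fun_sub ((dve 1).fun_neg) ((hdv z hz).const_mul (2*m))]
    simp only [ContinuousLinearMap.add_apply, ContinuousLinearMap.sub_apply,
      fderiv_fun_neg, ContinuousLinearMap.neg_apply,
      fderiv_const_mul (hdu z hz) (2*m), fderiv_const_mul (hdv z hz) (2*m),
      ContinuousLinearMap.smul_apply, smul_eq_mul]
    rw [fderiv_snd_apply hDv Complex.I 1, fderiv_snd_apply hDv 1 Complex.I]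
    linear_combination (2*m) * K1z + hsymv 1 Complex.I
  have hAv : lap v z = 4*m^2*v z := by
    unfold lap
    rw [E4.fderiv_eq, E3.fderiv_eq,
      fderiv_fun_sub ((due Complex.I).fun_neg) ((hdv z hz).const_mul (2*m)),
      fderiv_fun_sub (due 1) ((hdu z hz).const_mul (2*m))]
    simp only [ContinuousLinearMap.add_apply, ContinuousLinearMap.sub_apply,
      fderiv_fun_neg, ContinuousLinearMap.neg_apply,
      fderiv_const_mul (hdu z hz) (2*m), fderiv_const_mul (hdv z hz) (2*m),
      ContinuousLinearMap.smul_apply, smul_eq_mul]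
    rw [fderiv_snd_apply hDu Complex.I 1, fderiv_snd_apply hDu 1 Complex.I]
    linear_combination (-(2*m)) * K2z - hsymu 1 Complex.I
  -- the function g = |f|²
  have hgfun : g = fun w => u w * u w + v w * v w := by
    funext w
    simp only [hg_def, hu_def, hv_def]
    rw [Complex.sq_norm, Complex.normSq_apply]
  have keyg : ∀ w ∈ U, ∀ e, fderiv ℝ g w e
      = 2*u w*fderiv ℝ u w e + 2*v w*fderiv ℝ v w e := by
    intro w hw e
    rw [hgfun, fderiv_fun_add ((hdu w hw).fun_mul (hdu w hw)) ((hdv w hw).fun_mul (hdv w hw)),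
      ContinuousLinearMap.add_apply, fderiv_fun_mul (hdu w hw) (hdu w hw),
      fderiv_fun_mul (hdv w hw) (hdv w hw)]
    simp only [ContinuousLinearMap.add_apply, ContinuousLinearMap.smul_apply, smul_eq_mul]
    ring
  have Eg : ∀ e : ℂ, (fun w => fderiv ℝ g w e) =ᶠ[𝓝 z]
      fun w => 2*u w*fderiv ℝ u w e + 2*v w*fderiv ℝ v w e := by
    intro e
    filter_upwards [hz'] with w hw using keyg w hw e
  have main_term : ∀ e e' : ℂ, fderiv ℝ (fun w => fderiv ℝ g w e) z e' =
      2*(fderiv ℝ u z e')*(fderiv ℝ u z e) + 2*u z*(fderiv ℝ (fderiv ℝ u) z e' e)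
      + 2*(fderiv ℝ v z e')*(fderiv ℝ v z e) + 2*v z*(fderiv ℝ (fderiv ℝ v) z e' e) := by
    intro e e'
    rw [(Eg e).fderiv_eq,
      fderiv_fun_add (((hdu z hz).const_mul 2).fun_mul (due e)) (((hdv z hz).const_mul 2).fun_mul (dve e)),
      ContinuousLinearMap.add_apply,
      fderiv_fun_mul ((hdu z hz).const_mul 2) (due e),
      fderiv_fun_mul ((hdv z hz).const_mul 2) (dve e)]
    simp only [ContinuousLinearMap.add_apply, ContinuousLinearMap.smul_apply, smul_eq_mul,
      fderiv_const_mul (hdu z hz) 2, fderiv_const_mul (hdv z hz) 2,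
      fderiv_snd_apply hDu e e', fderiv_snd_apply hDv e e']
    ring
  have lapg : lap g z = 2*u z*(lap u z) + 2*v z*(lap v z) + 2*gradSq u z + 2*gradSq v z := by
    unfold lap gradSq
    rw [main_term 1 1, main_term Complex.I Complex.I,
      fderiv_snd_apply hDu 1 1, fderiv_snd_apply hDu Complex.I Complex.I,
      fderiv_snd_apply hDv 1 1, fderiv_snd_apply hDv Complex.I Complex.I]
    ring
  have final : lap g z = 8*m^2*‖f z‖^2 + 2*gradSq u z + 2*gradSq v z := by
    rw [lapg, hAu, hAv, Complex.sq_norm, Complex.normSq_apply]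
    simp only [hu_def, hv_def]
    ring
  refine ⟨by linarith [final], ?_⟩
  rw [final]
  have h1 : 0 ≤ gradSq u z := by unfold gradSq; positivity
  have h2 : 0 ≤ gradSq v z := by unfold gradSq; positivity
  positivity
end

section
/- Let m ∈ ℝ, c ∈ ℂ and R > 0. Let f be continuous on the closed disk {z : |z−c| ≤ R}, and twice continuously differentiable and massive holomorphic with mass m on the open disk {z : |z−c| < R}. Then the maximum of |f| over the closed disk is attained on the boundary circle: max_{|z−c|≤R} |f(z)| = max_{|z−c|=R} |f(z)| (maximum modulus principle for massive holomorphic functions). -/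
open Complex Topology Set Filter

section helpers

variable {G : Type*} [NormedAddCommGroup G] [NormedSpace ℝ G]

/-- Derivative of a function along a line. -/
lemma line_hasDerivAt {v : ℂ → G} {z e : ℂ} (t : ℝ)
    (h : DifferentiableAt ℝ v (z + t • e)) :
    HasDerivAt (fun s : ℝ => v (z + s • e)) (fderiv ℝ v (z + t • e) e) t := by
  have hL : HasDerivAt (fun s : ℝ => z + s • e) e t := by
    simpa using ((hasDerivAt_id t).smul_const e).const_add z
  exact h.hasFDerivAt.comp_hasDerivAt t hL

/-- 1-D second derivative test at a local maximum. -/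
lemma second_deriv_nonpos_of_isLocalMax {g g' : ℝ → ℝ} {a : ℝ}
    (hg : ∀ᶠ t in 𝓝 (0 : ℝ), HasDerivAt g (g' t) t)
    (hg' : HasDerivAt g' a 0) (hmax : IsLocalMax g 0) : a ≤ 0 := by
  by_contra hlt
  push_neg at hlt
  have h0 : g' 0 = 0 := hmax.hasDerivAt_eq_zero hg.self_of_nhds
  -- g' is positive on a right neighborhood
  have hslope : Tendsto (slope g' 0) (𝓝[≠] (0:ℝ)) (𝓝 a) :=
    hasDerivAt_iff_tendsto_slope.1 hg'
  have hpos : ∀ᶠ t in 𝓝[>] (0:ℝ), 0 < g' t := by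
    have h1 : ∀ᶠ t in 𝓝[>] (0:ℝ), 0 < slope g' 0 t := by
      have := hslope.mono_left (nhdsWithin_mono 0 (fun t (ht : t ∈ Ioi (0:ℝ)) => ne_of_gt ht))
      exact this.eventually (eventually_gt_nhds hlt)
    filter_upwards [h1, self_mem_nhdsWithin] with t ht ht'
    have : slope g' 0 t = g' t / t := by simp [slope_def_field, h0]
    rw [this] at ht
    have := mul_pos ht (show (0:ℝ) < t from ht')
    simpa [div_mul_cancel₀, ne_of_gt (show (0:ℝ) < t from ht')] using this
  obtain ⟨d1, hd1, hIoo⟩ := mem_nhdsGT_iff_exists_Ioo_subset.1 hpos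
  obtain ⟨d2, hd2, hball⟩ := Metric.eventually_nhds_iff_ball.1 (hg.and hmax)
  set d := min d1 d2 / 2 with hd
  have hdpos : 0 < d := half_pos (lt_min hd1 hd2)
  have hdlt1 : d < d1 := by
    have : min d1 d2 ≤ d1 := min_le_left _ _
    have h2 : (0:ℝ) < min d1 d2 := lt_min hd1 hd2
    nlinarith
  have hdlt2 : d < d2 := by
    have : min d1 d2 ≤ d2 := min_le_right _ _
    have h2 : (0:ℝ) < min d1 d2 := lt_min hd1 hd2
    nlinarith
  have hmono : StrictMonoOn g (Icc 0 d) := by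
    apply strictMonoOn_of_deriv_pos (convex_Icc 0 d)
    · intro t ht
      have : |t| < d2 := by
        rw [abs_lt]; constructor <;> [linarith [ht.1]; linarith [ht.2]]
      exact ((hball t (by simpa [Metric.mem_ball, Real.dist_eq] using this)).1).differentiableAt.continuousAt.continuousWithinAt
    · intro t ht
      rw [interior_Icc] at ht
      have hd' : |t| < d2 := by
        rw [abs_lt]; constructor <;> [linarith [ht.1]; linarith [ht.2]]
      have := (hball t (by simpa [Metric.mem_ball, Real.dist_eq] using hd')).1
      rw [this.deriv]
      exact hIoo ⟨ht.1, lt_trans ht.2 hdlt1⟩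
  have hlt' : g 0 < g d := hmono (by simp [le_of_lt hdpos]) (by simp [le_of_lt hdpos]) hdpos
  have : g d ≤ g 0 := by
    have : |d| < d2 := by rw [abs_of_pos hdpos]; exact hdlt2
    exact (hball d (by simpa [Metric.mem_ball, Real.dist_eq] using this)).2
  linarith

end helpers

/-- At an interior local max of a `C²` function, each pure second directional
derivative is nonpositive. -/
lemma sndDeriv_nonpos_of_isLocalMax {v : ℂ → ℝ} {z : ℂ}
    (hv : ContDiffAt ℝ 2 v z) (hmax : IsLocalMax v z) (e : ℂ) :
    fderiv ℝ (fderiv ℝ v) z e e ≤ 0 := by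
  have hLcont : Continuous (fun t : ℝ => z + t • e) := by continuity
  have hL0 : (fun t : ℝ => z + t • e) 0 = z := by simp
  have hLt : Tendsto (fun t : ℝ => z + t • e) (𝓝 0) (𝓝 z) := by
    simpa [hL0] using hLcont.tendsto 0
  have hev : ∀ᶠ w in 𝓝 z, ContDiffAt ℝ 2 v w := hv.eventually (by simp)
  have hg : ∀ᶠ t in 𝓝 (0:ℝ), HasDerivAt (fun s : ℝ => v (z + s • e))
      (fderiv ℝ v (z + t • e) e) t := by
    filter_upwards [hLt.eventually hev] with t ht
    exact line_hasDerivAt t (ht.differentiableAt two_ne_zero)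
  have hF : DifferentiableAt ℝ (fderiv ℝ v) z :=
    (hv.fderiv_right (le_refl 2)).differentiableAt one_ne_zero
  have hg' : HasDerivAt (fun t : ℝ => fderiv ℝ v (z + t • e) e)
      (fderiv ℝ (fderiv ℝ v) z e e) 0 := by
    have h1 : HasDerivAt (fun t : ℝ => fderiv ℝ v (z + t • e))
        (fderiv ℝ (fderiv ℝ v) z e) 0 := by
      have := line_hasDerivAt (v := fderiv ℝ v) (z := z) (e := e) 0 (by simpa using hF)
      simpa using this
    simpa using h1.clm_apply (hasDerivAt_const (0:ℝ) e)
  have hmax' : IsLocalMax (fun s : ℝ => v (z + s • e)) 0 := by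
    have := hLt.eventually hmax
    simpa [IsLocalMax, IsMaxFilter, hL0] using this
  exact second_deriv_nonpos_of_isLocalMax hg hg' hmax'

/-- Second directional derivative of `‖g‖²`. -/
lemma sndDeriv_normSq {g : ℂ → ℂ} {z : ℂ}
    (hg : ∀ᶠ w in 𝓝 z, ContDiffAt ℝ 2 g w) (e : ℂ) :
    fderiv ℝ (fderiv ℝ (fun w => (inner ℝ (g w) (g w) : ℝ))) z e e
      = 2 * (inner ℝ (g z) (fderiv ℝ (fderiv ℝ g) z e e) : ℝ)
        + 2 * ‖fderiv ℝ g z e‖ ^ 2 := by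
  set u := fun w => (inner ℝ (g w) (g w) : ℝ) with hu
  have hgz : ContDiffAt ℝ 2 g z := hg.self_of_nhds
  have hLt : Tendsto (fun t : ℝ => z + t • e) (𝓝 0) (𝓝 z) := by
    have : Continuous (fun t : ℝ => z + t • e) := by continuity
    simpa using this.tendsto 0
  have hu2 : ContDiffAt ℝ 2 u z := hgz.inner ℝ hgz
  have hDu : DifferentiableAt ℝ (fderiv ℝ u) z :=
    (hu2.fderiv_right (le_refl 2)).differentiableAt one_ne_zero
  have h1 : HasDerivAt (fun t : ℝ => fderiv ℝ u (z + t • e) e)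
      (fderiv ℝ (fderiv ℝ u) z e e) 0 := by
    have h0 : HasDerivAt (fun t : ℝ => fderiv ℝ u (z + t • e))
        (fderiv ℝ (fderiv ℝ u) z e) 0 := by
      have := line_hasDerivAt (v := fderiv ℝ u) (z := z) (e := e) 0 (by simpa using hDu)
      simpa using this
    simpa using h0.clm_apply (hasDerivAt_const (0:ℝ) e)
  have heq : ∀ᶠ w in 𝓝 z, fderiv ℝ u w e
      = 2 * (inner ℝ (g w) (fderiv ℝ g w e) : ℝ) := by
    filter_upwards [hg] with w hw
    have hgw : HasFDerivAt g (fderiv ℝ g w) w :=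
      (hw.differentiableAt two_ne_zero).hasFDerivAt
    rw [hu, (hgw.inner ℝ hgw).fderiv]
    simp [fderivInnerCLM_apply, real_inner_comm]
    ring
  have h1' : HasDerivAt (fun t : ℝ => 2 * (inner ℝ (g (z + t • e)) (fderiv ℝ g (z + t • e) e) : ℝ))
      (fderiv ℝ (fderiv ℝ u) z e e) 0 := by
    apply h1.congr_of_eventuallyEq
    filter_upwards [hLt.eventually heq] with t ht
    exact ht.symm
  have hgL : HasDerivAt (fun t : ℝ => g (z + t • e)) (fderiv ℝ g z e) 0 := by
    have := line_hasDerivAt (v := g) (z := z) (e := e) 0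
      (by simpa using hgz.differentiableAt two_ne_zero)
    simpa using this
  have hFg : DifferentiableAt ℝ (fderiv ℝ g) z :=
    (hgz.fderiv_right (le_refl 2)).differentiableAt one_ne_zero
  have hFgLe : HasDerivAt (fun t : ℝ => fderiv ℝ g (z + t • e) e)
      (fderiv ℝ (fderiv ℝ g) z e e) 0 := by
    have h0 : HasDerivAt (fun t : ℝ => fderiv ℝ g (z + t • e))
        (fderiv ℝ (fderiv ℝ g) z e) 0 := by
      have := line_hasDerivAt (v := fderiv ℝ g) (z := z) (e := e) 0 (by simpa using hFg)
      simpa using this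
    simpa using h0.clm_apply (hasDerivAt_const (0:ℝ) e)
  have h2 : HasDerivAt (fun t : ℝ => 2 * (inner ℝ (g (z + t • e)) (fderiv ℝ g (z + t • e) e) : ℝ))
      (2 * ((inner ℝ (g z) (fderiv ℝ (fderiv ℝ g) z e e) : ℝ)
        + (inner ℝ (fderiv ℝ g z e) (fderiv ℝ g z e) : ℝ))) 0 := by
    have := (hgL.inner ℝ hFgLe).const_mul (2:ℝ)
    simpa using this
  have := h1'.unique h2
  rw [this, real_inner_self_eq_norm_sq]
  ring

/-- If `∂̄f = m conj f` near `z` and `f` is `C²`, then `Δf = 4m²f` at `z`. -/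
lemma laplacian_massive {m : ℝ} {f : ℂ → ℂ} {z : ℂ}
    (h2 : ∀ᶠ w in 𝓝 z, ContDiffAt ℝ 2 f w)
    (heq : ∀ᶠ w in 𝓝 z, fderiv ℝ f w 1 + Complex.I * fderiv ℝ f w Complex.I
      = 2 * (m : ℂ) * (starRingEnd ℂ) (f w)) :
    fderiv ℝ (fderiv ℝ f) z 1 1 + fderiv ℝ (fderiv ℝ f) z Complex.I Complex.I
      = 4 * (m : ℂ) ^ 2 * f z := by
  have hfz : ContDiffAt ℝ 2 f z := h2.self_of_nhds
  have hF : DifferentiableAt ℝ (fderiv ℝ f) z :=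
    (hfz.fderiv_right (le_refl 2)).differentiableAt one_ne_zero
  have hfd : DifferentiableAt ℝ f z := hfz.differentiableAt two_ne_zero
  -- derivative of the left-hand side function
  have hL : HasFDerivAt (fun w => fderiv ℝ f w 1 + Complex.I * fderiv ℝ f w Complex.I)
      ((ContinuousLinearMap.apply ℝ ℂ (1:ℂ)).comp (fderiv ℝ (fderiv ℝ f) z) +
        (Complex.I • ((ContinuousLinearMap.apply ℝ ℂ (Complex.I)).comp
          (fderiv ℝ (fderiv ℝ f) z)))) z := by
    have h1 : HasFDerivAt (fun w => fderiv ℝ f w 1)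
        ((ContinuousLinearMap.apply ℝ ℂ (1:ℂ)).comp (fderiv ℝ (fderiv ℝ f) z)) z :=
      (ContinuousLinearMap.apply ℝ ℂ (1:ℂ)).hasFDerivAt.comp z hF.hasFDerivAt
    have h2' : HasFDerivAt (fun w => fderiv ℝ f w Complex.I)
        ((ContinuousLinearMap.apply ℝ ℂ (Complex.I)).comp (fderiv ℝ (fderiv ℝ f) z)) z :=
      (ContinuousLinearMap.apply ℝ ℂ (Complex.I)).hasFDerivAt.comp z hF.hasFDerivAt
    exact h1.add (h2'.const_mul Complex.I)
  -- derivative of the right-hand side function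
  have hR : HasFDerivAt (fun w => 2 * (m : ℂ) * (starRingEnd ℂ) (f w))
      ((2 * (m : ℂ)) • ((Complex.conjCLE.toContinuousLinearMap).comp (fderiv ℝ f z))) z := by
    have hc : HasFDerivAt (fun w => (starRingEnd ℂ) (f w))
        ((Complex.conjCLE.toContinuousLinearMap).comp (fderiv ℝ f z)) z :=
      (Complex.conjCLE.toContinuousLinearMap.hasFDerivAt).comp z hfd.hasFDerivAt
    exact hc.const_mul (2 * (m : ℂ))
  have hLR : HasFDerivAt (fun w => fderiv ℝ f w 1 + Complex.I * fderiv ℝ f w Complex.I)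
      ((2 * (m : ℂ)) • ((Complex.conjCLE.toContinuousLinearMap).comp (fderiv ℝ f z))) z :=
    hR.congr_of_eventuallyEq heq
  have hders := hL.unique hLR
  have key : ∀ e : ℂ, fderiv ℝ (fderiv ℝ f) z e 1
      + Complex.I * fderiv ℝ (fderiv ℝ f) z e Complex.I
      = 2 * (m : ℂ) * (starRingEnd ℂ) (fderiv ℝ f z e) := by
    intro e
    have := DFunLike.congr_fun hders e
    simpa [ContinuousLinearMap.comp_apply, ContinuousLinearMap.apply_apply,
      ContinuousLinearMap.add_apply, ContinuousLinearMap.smul_apply,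
      Complex.conjCLE_apply, smul_eq_mul, mul_comm] using this
  have hsymm : fderiv ℝ (fderiv ℝ f) z 1 Complex.I
      = fderiv ℝ (fderiv ℝ f) z Complex.I 1 :=
    (hfz.isSymmSndFDerivAt (by simp [minSmoothness_of_isRCLikeNormedField])) 1 Complex.I
  have h1 := key 1
  have hI := key Complex.I
  have hz : fderiv ℝ f z 1 + Complex.I * fderiv ℝ f z Complex.I
      = 2 * (m : ℂ) * (starRingEnd ℂ) (f z) := heq.self_of_nhds
  have hz' := congrArg (starRingEnd ℂ) hz
  simp only [map_add, map_mul, Complex.conj_I, Complex.conj_conj, Complex.conj_ofReal,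
    map_ofNat] at hz'
  linear_combination h1 - Complex.I * hI - Complex.I * hsymm + 2 * (m:ℂ) * hz' + (fderiv ℝ (fderiv ℝ f) z Complex.I Complex.I) * Complex.I_sq

/-- Weak maximum principle for functions with nonnegative Laplacian. -/
lemma max_principle_subharmonic {v : ℂ → ℝ} {c : ℂ} {R : ℝ} (hR : 0 < R)
    (hc : ContinuousOn v (Metric.closedBall c R))
    (hv : ∀ z ∈ Metric.ball c R, ContDiffAt ℝ 2 v z)
    (hl : ∀ z ∈ Metric.ball c R, 0 ≤ fderiv ℝ (fderiv ℝ v) z 1 1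
      + fderiv ℝ (fderiv ℝ v) z Complex.I Complex.I) :
    ∃ z ∈ Metric.sphere c R, ∀ w ∈ Metric.closedBall c R, v w ≤ v z := by
  set q : ℂ → ℝ := fun x => (inner ℝ (x - c) (x - c) : ℝ) with hqdef
  have hqsmooth : ContDiff ℝ 2 q :=
    (contDiff_id.sub contDiff_const).inner ℝ (contDiff_id.sub contDiff_const)
  have hfderiv_g : fderiv ℝ (fun x : ℂ => x - c) = fun _ => ContinuousLinearMap.id ℝ ℂ := by
    funext w
    rw [fderiv_sub_const, fderiv_id']
  have hq2 : ∀ (z e : ℂ), fderiv ℝ (fderiv ℝ q) z e e = 2 * ‖e‖ ^ 2 := by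
    intro z e
    have := sndDeriv_normSq (g := fun x : ℂ => x - c) (z := z)
      (Eventually.of_forall fun w =>
        ((contDiff_id.sub contDiff_const).contDiffAt : ContDiffAt ℝ 2 _ w)) e
    rw [hqdef]
    rw [this, hfderiv_g]
    simp [fderiv_const]
  have hq0 : ∀ x : ℂ, q x = ‖x - c‖ ^ 2 := fun x => real_inner_self_eq_norm_sq _
  -- maximum of v on the sphere
  obtain ⟨z, hzmem, hz⟩ := (isCompact_sphere c R).exists_isMaxOn
    (NormedSpace.sphere_nonempty.2 hR.le)
    (hc.mono Metric.sphere_subset_closedBall)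
  refine ⟨z, hzmem, fun w hw => ?_⟩
  -- suffices to bound up to ε
  have key : ∀ ε : ℝ, 0 < ε → v w ≤ v z + ε * R ^ 2 := by
    intro ε hε
    set ve : ℂ → ℝ := fun x => v x + ε * q x with hvedef
    have hvecont : ContinuousOn ve (Metric.closedBall c R) :=
      hc.add (((continuous_const.mul hqsmooth.continuous)).continuousOn)
    obtain ⟨x₀, hx₀mem, hx₀⟩ := (isCompact_closedBall c R).exists_isMaxOn
      (Metric.nonempty_closedBall.2 hR.le) hvecont
    -- x₀ is on the sphere
    have hx₀sphere : x₀ ∈ Metric.sphere c R := by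
      by_contra hnot
      have hx₀ball : x₀ ∈ Metric.ball c R := by
        rw [Metric.mem_ball]
        rcases lt_or_eq_of_le (Metric.mem_closedBall.1 hx₀mem) with h | h
        · exact h
        · exact absurd (Metric.mem_sphere.2 h) hnot
      have hlocal : IsLocalMax ve x₀ :=
        hx₀.isLocalMax (Filter.mem_of_superset (Metric.isOpen_ball.mem_nhds hx₀ball)
          Metric.ball_subset_closedBall)
      have hve2 : ContDiffAt ℝ 2 ve x₀ :=
        (hv x₀ hx₀ball).add (contDiffAt_const.mul hqsmooth.contDiffAt)
      -- Laplacian of ve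
      have hlap : ∀ e : ℂ, fderiv ℝ (fderiv ℝ ve) x₀ e e
          = fderiv ℝ (fderiv ℝ v) x₀ e e + ε * (2 * ‖e‖ ^ 2) := by
        intro e
        have hstep1 : fderiv ℝ ve =ᶠ[𝓝 x₀]
            fun y => fderiv ℝ v y + ε • fderiv ℝ q y := by
          filter_upwards [Metric.isOpen_ball.mem_nhds hx₀ball] with y hy
          rw [hvedef]
          rw [fderiv_fun_add ((hv y hy).differentiableAt two_ne_zero)
            ((contDiffAt_const.mul hqsmooth.contDiffAt).differentiableAt two_ne_zero),
            fderiv_const_mul (hqsmooth.differentiable two_ne_zero).differentiableAt ε]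
        have hdv : DifferentiableAt ℝ (fderiv ℝ v) x₀ :=
          ((hv x₀ hx₀ball).fderiv_right (le_refl 2)).differentiableAt one_ne_zero
        have hdq : DifferentiableAt ℝ (fderiv ℝ q) x₀ :=
          ((hqsmooth.contDiffAt.fderiv_right (le_refl 2)).differentiableAt one_ne_zero)
        rw [hstep1.fderiv_eq, fderiv_fun_add (g := fun y => ε • fderiv ℝ q y) hdv (hdq.const_smul ε),
          fderiv_fun_const_smul hdq ε]
        simp [hq2 x₀ e]
      have h1 := sndDeriv_nonpos_of_isLocalMax hve2 hlocal 1
      have hI := sndDeriv_nonpos_of_isLocalMax hve2 hlocal Complex.I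
      have := hl x₀ hx₀ball
      rw [hlap 1, hlap Complex.I] at *
      simp only [norm_one, Complex.norm_I] at h1 hI
      nlinarith
    -- conclude
    have hqx₀ : q x₀ = R ^ 2 := by
      rw [hq0, ← dist_eq_norm]
      rw [Metric.mem_sphere.1 hx₀sphere]
    calc v w ≤ ve w := by
          have hrfl : ve w = v w + ε * q w := rfl
          have : 0 ≤ ε * q w := mul_nonneg hε.le (by rw [hq0]; positivity)
          linarith
      _ ≤ ve x₀ := hx₀ hw
      _ = v x₀ + ε * R ^ 2 := by
          have hrfl : ve x₀ = v x₀ + ε * q x₀ := rfl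
          rw [hrfl, hqx₀]
      _ ≤ v z + ε * R ^ 2 := add_le_add_left (hz hx₀sphere) _
  by_contra hcon
  push_neg at hcon
  have hR2 : 0 < R ^ 2 := by positivity
  have hε : 0 < (v w - v z) / (2 * R ^ 2) := div_pos (by linarith) (by positivity)
  have hkey := key _ hε
  have heq2 : (v w - v z) / (2 * R ^ 2) * R ^ 2 = (v w - v z) / 2 := by
    field_simp
  rw [heq2] at hkey
  linarith


/-- Maximum modulus principle for massive holomorphic functions: if `f` is continuous
on the closed disk and twice continuously differentiable and massive holomorphic with
mass `m` on the open disk, then the maximum of `|f|` over the closed disk is attained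
on the boundary circle. -/
theorem stmt12 (m : ℝ) (c : ℂ) (R : ℝ) (hR : 0 < R) (f : ℂ → ℂ)
    (hcont : ContinuousOn f (Metric.closedBall c R))
    (hf2 : ContDiffOn ℝ 2 f (Metric.ball c R))
    (hf : MassiveHolomorphicOn m f (Metric.ball c R)) :
    ∃ z ∈ Metric.sphere c R, ∀ w ∈ Metric.closedBall c R,
      ‖f w‖ ≤ ‖f z‖ := by
  obtain ⟨hf1, hfd⟩ := hf
  set u : ℂ → ℝ := fun w => (inner ℝ (f w) (f w) : ℝ) with hudef
  have hball : ∀ z ∈ Metric.ball c R, ∀ᶠ w in 𝓝 z, ContDiffAt ℝ 2 f w := by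
    intro z hz
    filter_upwards [Metric.isOpen_ball.mem_nhds hz] with w hw
    exact (hf2 w hw).contDiffAt (Metric.isOpen_ball.mem_nhds hw)
  have hucont : ContinuousOn u (Metric.closedBall c R) := hcont.inner hcont
  have hu2 : ∀ z ∈ Metric.ball c R, ContDiffAt ℝ 2 u z := fun z hz =>
    ((hball z hz).self_of_nhds).inner ℝ ((hball z hz).self_of_nhds)
  have hlap : ∀ z ∈ Metric.ball c R, 0 ≤ fderiv ℝ (fderiv ℝ u) z 1 1
      + fderiv ℝ (fderiv ℝ u) z Complex.I Complex.I := by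
    intro z hz
    have hev := hball z hz
    have h1 := sndDeriv_normSq hev 1
    have hI := sndDeriv_normSq hev Complex.I
    have heqd : ∀ᶠ w in 𝓝 z, fderiv ℝ f w 1 + Complex.I * fderiv ℝ f w Complex.I
        = 2 * (m : ℂ) * (starRingEnd ℂ) (f w) := by
      filter_upwards [Metric.isOpen_ball.mem_nhds hz] with w hw
      have := hfd w hw
      rw [dbar] at this
      linear_combination 2 * this
    have hdelta := laplacian_massive hev heqd
    rw [hudef]
    rw [h1, hI]
    have hsum : (inner ℝ (f z) (fderiv ℝ (fderiv ℝ f) z 1 1) : ℝ)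
        + (inner ℝ (f z) (fderiv ℝ (fderiv ℝ f) z Complex.I Complex.I) : ℝ)
        = (inner ℝ (f z) (4 * (m:ℂ)^2 * f z) : ℝ) := by
      rw [← inner_add_right, hdelta]
    have hval : (inner ℝ (f z) (4 * (m:ℂ)^2 * f z) : ℝ)
        = 4 * m ^ 2 * Complex.normSq (f z) := by
      rw [Complex.inner]
      have : (starRingEnd ℂ) (f z) * (4 * (m:ℂ)^2 * f z)
          = ((4 * m ^ 2 * Complex.normSq (f z) : ℝ) : ℂ) := by
        rw [show ((4 * m ^ 2 * Complex.normSq (f z) : ℝ) : ℂ)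
            = 4 * (m:ℂ)^2 * ((Complex.normSq (f z) : ℝ) : ℂ) by push_cast; ring,
          ← Complex.mul_conj]
        ring
      rw [mul_comm _ ((starRingEnd ℂ) (f z)), this, Complex.ofReal_re]
    have hnsq : 0 ≤ Complex.normSq (f z) := Complex.normSq_nonneg _
    have hn1 : (0:ℝ) ≤ ‖fderiv ℝ f z 1‖ ^ 2 := by positivity
    have hn2 : (0:ℝ) ≤ ‖fderiv ℝ f z Complex.I‖ ^ 2 := by positivity
    nlinarith [sq_nonneg m]
  obtain ⟨z, hzs, hzmax⟩ := max_principle_subharmonic hR hucont hu2 hlap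
  refine ⟨z, hzs, fun w hw => ?_⟩
  have hineq := hzmax w hw
  have hw2 : u w = ‖f w‖ ^ 2 := real_inner_self_eq_norm_sq _
  have hz2 : u z = ‖f z‖ ^ 2 := real_inner_self_eq_norm_sq _
  rw [hw2, hz2] at hineq
  have h1 : (0:ℝ) ≤ ‖f w‖ := norm_nonneg _
  have h2 : (0:ℝ) ≤ ‖f z‖ := norm_nonneg _
  have : ‖f w‖ ≤ ‖f z‖ := by nlinarith
  simpa using this
end

section
/- For all c > 0 and r > 0, the integral ∫_r^∞ K_{1/2}(2cx)·K_{1/2}(2c(x−r))·c dx converges and equals (π/4)·K_0(2cr). -/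
open MeasureTheory Set

/-- The modified Bessel function of the second kind,
`K_ν(x) = ∫_0^∞ e^{−x·cosh t}·cosh(νt) dt` (for `x > 0`). -/
noncomputable def besselK (ν x : ℝ) : ℝ :=
  ∫ t in Ioi (0 : ℝ), Real.exp (-x * Real.cosh t) * Real.cosh (ν * t)


lemma sinh_ge_half (t : ℝ) (ht : 0 ≤ t) : t / 2 ≤ Real.sinh t := by
  rw [Real.sinh_eq]
  have h1 : t + 1 ≤ Real.exp t := Real.add_one_le_exp t
  have h2 : Real.exp (-t) ≤ 1 := Real.exp_le_one_iff.mpr (by linarith)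
  linarith

lemma cosh_ge_quad (t : ℝ) (ht : 0 ≤ t) : 1 + t ^ 2 / 8 ≤ Real.cosh t := by
  have h : Real.cosh t = 2 * Real.sinh (t / 2) ^ 2 + 1 := by
    have := Real.cosh_two_mul (t / 2)
    have h2 := Real.cosh_sq (t / 2)
    rw [show 2 * (t / 2) = t by ring] at this
    rw [this, h2]; ring
  have hs : t / 2 / 2 ≤ Real.sinh (t / 2) := sinh_ge_half _ (by linarith)
  have hsq : (t / 4) ^ 2 ≤ Real.sinh (t / 2) ^ 2 := by
    apply sq_le_sq' <;> nlinarith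
  nlinarith

lemma cosh_le_exp_abs (y : ℝ) : Real.cosh y ≤ Real.exp |y| := by
  rw [Real.cosh_eq]
  have h1 : Real.exp y ≤ Real.exp |y| := Real.exp_le_exp.mpr (le_abs_self y)
  have h2 : Real.exp (-y) ≤ Real.exp |y| := Real.exp_le_exp.mpr (neg_le_abs y)
  linarith

lemma besselK_integrableOn (ν x : ℝ) (hx : 0 < x) :
    IntegrableOn (fun t => Real.exp (-x * Real.cosh t) * Real.cosh (ν * t)) (Ioi 0) := by
  have hb : Integrable (fun t : ℝ =>
      Real.exp (-x + 2 * ν ^ 2 / x) * Real.exp (-(x / 8) * (t - 4 * |ν| / x) ^ 2)) := by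
    exact ((integrable_exp_neg_mul_sq (by positivity : (0:ℝ) < x / 8)).comp_sub_right
      (4 * |ν| / x)).const_mul _
  apply Integrable.mono' hb.integrableOn
  · exact ((Real.continuous_exp.comp (continuous_const.mul Real.continuous_cosh)).mul
      (Real.continuous_cosh.comp (continuous_const.mul continuous_id))).aestronglyMeasurable
  · filter_upwards [ae_restrict_mem measurableSet_Ioi] with t ht
    have ht' : (0:ℝ) < t := ht
    have hpos : 0 < Real.exp (-x * Real.cosh t) * Real.cosh (ν * t) :=
      mul_pos (Real.exp_pos _) (Real.cosh_pos _)
    rw [Real.norm_eq_abs, abs_of_pos hpos]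
    have h1 : Real.cosh (ν * t) ≤ Real.exp (|ν| * t) := by
      have := cosh_le_exp_abs (ν * t)
      rwa [abs_mul, abs_of_pos ht'] at this
    have h2 : Real.exp (-x * Real.cosh t) ≤ Real.exp (-x * (1 + t ^ 2 / 8)) := by
      apply Real.exp_le_exp.mpr
      have := cosh_ge_quad t ht'.le
      nlinarith
    calc Real.exp (-x * Real.cosh t) * Real.cosh (ν * t)
        ≤ Real.exp (-x * (1 + t ^ 2 / 8)) * Real.exp (|ν| * t) := by
          apply mul_le_mul h2 h1 (Real.cosh_pos _).le (Real.exp_pos _).le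
      _ = Real.exp (-x + 2 * ν ^ 2 / x) * Real.exp (-(x / 8) * (t - 4 * |ν| / x) ^ 2) := by
          rw [← Real.exp_add, ← Real.exp_add]
          congr 1
          have hxne : x ≠ 0 := hx.ne'
          have habs : |ν| ^ 2 = ν ^ 2 := sq_abs ν
          field_simp
          nlinarith [sq_abs ν]


lemma besselK_half_integral (x : ℝ) :
    (∫ t in Ioi (0:ℝ), Real.exp (-x * Real.cosh t) * Real.cosh (1 / 2 * t))
      = Real.sqrt (Real.pi / (2 * x)) * Real.exp (-x) := by
  set f : ℝ → ℝ := fun s => 2 * Real.arsinh s with hf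
  have himg : f '' Ioi 0 = Ioi 0 := by
    ext t
    constructor
    · rintro ⟨s, hs, rfl⟩
      have : 0 < Real.arsinh s := Real.arsinh_pos_iff.mpr hs
      have : f s = 2 * Real.arsinh s := rfl
      rw [this]; exact mem_Ioi.mpr (by linarith)
    · intro ht
      refine ⟨Real.sinh (t / 2), ?_, ?_⟩
      · exact Real.sinh_pos_iff.mpr (by simpa using half_pos (show (0:ℝ) < t from ht))
      · simp [hf, Real.arsinh_sinh]; ring
  have hderiv : ∀ s ∈ Ioi (0:ℝ), HasDerivWithinAt f (2 * (Real.sqrt (1 + s ^ 2))⁻¹) (Ioi 0) s :=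
    fun s _ => ((Real.hasDerivAt_arsinh s).const_mul 2).hasDerivWithinAt
  have hinj : InjOn f (Ioi 0) := fun a _ b _ h =>
    Real.arsinh_injective (mul_left_cancel₀ two_ne_zero h)
  have key := integral_image_eq_integral_abs_deriv_smul measurableSet_Ioi hderiv hinj
    (fun t => Real.exp (-x * Real.cosh t) * Real.cosh (1 / 2 * t))
  rw [himg] at key
  rw [key]
  have heq : ∀ s ∈ Ioi (0:ℝ),
      |2 * (Real.sqrt (1 + s ^ 2))⁻¹| •
        (Real.exp (-x * Real.cosh (f s)) * Real.cosh (1 / 2 * f s))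
      = 2 * Real.exp (-x) * Real.exp (-(2 * x) * s ^ 2) := by
    intro s _
    have h1 : (0:ℝ) < 1 + s ^ 2 := by positivity
    have hsq : Real.sqrt (1 + s ^ 2) ^ 2 = 1 + s ^ 2 := Real.sq_sqrt h1.le
    have hspos : 0 < Real.sqrt (1 + s ^ 2) := Real.sqrt_pos.mpr h1
    have hc2 : Real.cosh (f s) = 1 + 2 * s ^ 2 := by
      rw [hf]
      simp only
      rw [Real.cosh_two_mul, Real.cosh_arsinh, hsq]
      ring_nf
      rw [Real.sinh_arsinh]
      ring
    have hc1 : Real.cosh (1 / 2 * f s) = Real.sqrt (1 + s ^ 2) := by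
      rw [hf]
      simp only
      rw [show 1 / 2 * (2 * Real.arsinh s) = Real.arsinh s by ring, Real.cosh_arsinh]
    have hexp : Real.exp (-x * (1 + 2 * s ^ 2)) = Real.exp (-x) * Real.exp (-(2 * x) * s ^ 2) := by
      rw [← Real.exp_add]; ring_nf
    rw [hc2, hc1, smul_eq_mul, abs_of_pos (by positivity), hexp]
    field_simp
  rw [setIntegral_congr_fun measurableSet_Ioi heq]
  rw [MeasureTheory.integral_const_mul, integral_gaussian_Ioi (2 * x)]
  ring

lemma besselK_half {x : ℝ} (hx : 0 < x) :
    besselK (1 / 2) x = Real.sqrt (Real.pi / (2 * x)) * Real.exp (-x) := by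
  rw [besselK]
  exact besselK_half_integral x

/-- The convolution-type Bessel integral identity:
`∫_r^∞ K_{1/2}(2cx)·K_{1/2}(2c(x−r))·c dx = (π/4)·K_0(2cr)`, including convergence. -/
theorem stmt16 (c r : ℝ) (hc : 0 < c) (hr : 0 < r) :
    IntegrableOn (fun x => besselK (1 / 2) (2 * c * x) * besselK (1 / 2) (2 * c * (x - r)) * c)
      (Ioi r) ∧
    (∫ x in Ioi r, besselK (1 / 2) (2 * c * x) * besselK (1 / 2) (2 * c * (x - r)) * c) =
      Real.pi / 4 * besselK 0 (2 * c * r) := by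
  set G : ℝ → ℝ :=
    fun x => besselK (1 / 2) (2 * c * x) * besselK (1 / 2) (2 * c * (x - r)) * c with hG
  set f : ℝ → ℝ := fun u => r * (Real.cosh u + 1) / 2 with hf
  have himg : f '' Ioi 0 = Ioi r := by
    ext x
    constructor
    · rintro ⟨u, hu, rfl⟩
      have h1 : 1 < Real.cosh u := Real.one_lt_cosh.mpr (ne_of_gt hu)
      have : r < r * (Real.cosh u + 1) / 2 := by nlinarith
      exact mem_Ioi.mpr this
    · intro hx
      have hx' : r < x := hx
      set y : ℝ := 2 * x / r - 1 with hy
      have hy1 : 1 < y := by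
        rw [hy]
        rw [lt_sub_iff_add_lt]
        rw [lt_div_iff₀ hr]
        linarith
      refine ⟨Real.arsinh (Real.sqrt (y ^ 2 - 1)), ?_, ?_⟩
      · exact mem_Ioi.mpr (Real.arsinh_pos_iff.mpr (Real.sqrt_pos.mpr (by nlinarith)))
      · have hcosh : Real.cosh (Real.arsinh (Real.sqrt (y ^ 2 - 1))) = y := by
          rw [Real.cosh_arsinh, Real.sq_sqrt (by nlinarith : (0:ℝ) ≤ y ^ 2 - 1),
            show 1 + (y ^ 2 - 1) = y ^ 2 by ring, Real.sqrt_sq (by linarith)]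
        show r * (Real.cosh _ + 1) / 2 = x
        rw [hcosh, hy]
        field_simp
        ring
  have hderiv : ∀ u ∈ Ioi (0:ℝ), HasDerivWithinAt f (r * Real.sinh u / 2) (Ioi 0) u :=
    fun u _ => ((((Real.hasDerivAt_cosh u).add_const 1).const_mul r).div_const 2).hasDerivWithinAt
  have hinj : InjOn f (Ioi 0) := by
    intro a ha b hb h
    have : Real.cosh a = Real.cosh b := by
      have : r * (Real.cosh a + 1) / 2 = r * (Real.cosh b + 1) / 2 := h
      field_simp at this
      linarith
    have habs : |a| = |b| := by
      have h1 := Real.cosh_le_cosh.mp this.le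
      have h2 := Real.cosh_le_cosh.mp this.ge
      exact le_antisymm h1 h2
    rwa [abs_of_pos (mem_Ioi.mp ha), abs_of_pos (mem_Ioi.mp hb)] at habs
  -- key pointwise identity
  have heq : ∀ u ∈ Ioi (0:ℝ),
      |r * Real.sinh u / 2| • G (f u) = Real.pi / 4 * Real.exp (-(2 * c * r) * Real.cosh u) := by
    intro u hu
    have hu' : (0:ℝ) < u := hu
    have hsinh : 0 < Real.sinh u := Real.sinh_pos_iff.mpr hu'
    have hcosh1 : 1 < Real.cosh u := Real.one_lt_cosh.mpr (ne_of_gt hu')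
    have hA : 2 * c * f u = c * r * (Real.cosh u + 1) := by rw [hf]; field_simp
    have hB : 2 * c * (f u - r) = c * r * (Real.cosh u - 1) := by rw [hf]; field_simp; ring
    have hcp := Real.cosh_pos u
    have hApos : 0 < 2 * c * f u := by
      rw [hA]; exact mul_pos (mul_pos hc hr) (by linarith)
    have hBpos : 0 < 2 * c * (f u - r) := by
      rw [hB]; exact mul_pos (mul_pos hc hr) (by linarith)
    rw [hG]
    simp only
    rw [besselK_half hApos, besselK_half hBpos, hA, hB]
    rw [smul_eq_mul, abs_of_pos (by positivity)]
    -- sqrt part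
    have hsq : Real.sqrt (Real.pi / (2 * (c * r * (Real.cosh u + 1)))) *
        Real.sqrt (Real.pi / (2 * (c * r * (Real.cosh u - 1))))
        = Real.pi / (2 * (c * r * Real.sinh u)) := by
      rw [← Real.sqrt_mul (by positivity)]
      have hs2 : (Real.cosh u + 1) * (Real.cosh u - 1) = Real.sinh u ^ 2 := by
        have := Real.cosh_sq u; nlinarith
      have hprod : (2 * (c * r * (Real.cosh u + 1))) * (2 * (c * r * (Real.cosh u - 1)))
          = (2 * (c * r * Real.sinh u)) ^ 2 := by linear_combination (4 * c ^ 2 * r ^ 2) * hs2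
      rw [show Real.pi / (2 * (c * r * (Real.cosh u + 1))) *
            (Real.pi / (2 * (c * r * (Real.cosh u - 1))))
          = (Real.pi / (2 * (c * r * Real.sinh u))) ^ 2 by
        rw [div_mul_div_comm, hprod, div_pow]; ring]
      exact Real.sqrt_sq (by positivity)
    have hexp : Real.exp (-(c * r * (Real.cosh u + 1))) *
        Real.exp (-(c * r * (Real.cosh u - 1))) = Real.exp (-(2 * c * r) * Real.cosh u) := by
      rw [← Real.exp_add]; ring_nf
    calc r * Real.sinh u / 2 *
          (Real.sqrt (Real.pi / (2 * (c * r * (Real.cosh u + 1)))) *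
              Real.exp (-(c * r * (Real.cosh u + 1))) *
            (Real.sqrt (Real.pi / (2 * (c * r * (Real.cosh u - 1)))) *
              Real.exp (-(c * r * (Real.cosh u - 1)))) * c)
        = (Real.sqrt (Real.pi / (2 * (c * r * (Real.cosh u + 1)))) *
            Real.sqrt (Real.pi / (2 * (c * r * (Real.cosh u - 1))))) *
          (Real.exp (-(c * r * (Real.cosh u + 1))) *
            Real.exp (-(c * r * (Real.cosh u - 1)))) * (c * r * Real.sinh u / 2) := by ring
      _ = Real.pi / (2 * (c * r * Real.sinh u)) * Real.exp (-(2 * c * r) * Real.cosh u)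
            * (c * r * Real.sinh u / 2) := by rw [hsq, hexp]
      _ = Real.pi / 4 * Real.exp (-(2 * c * r) * Real.cosh u) := by
          field_simp
          ring
  -- integrability of the target
  have hH : IntegrableOn (fun u => Real.pi / 4 * Real.exp (-(2 * c * r) * Real.cosh u))
      (Ioi 0) := by
    have := besselK_integrableOn 0 (2 * c * r) (by positivity)
    simp only [zero_mul, Real.cosh_zero, mul_one] at this
    exact this.const_mul _
  have hint : IntegrableOn G (Ioi r) := by
    rw [← himg, integrableOn_image_iff_integrableOn_abs_deriv_smul measurableSet_Ioi hderiv hinj]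
    exact (hH.congr_fun (fun u hu => (heq u hu).symm) measurableSet_Ioi)
  refine ⟨hint, ?_⟩
  have key := integral_image_eq_integral_abs_deriv_smul measurableSet_Ioi hderiv hinj G
  rw [himg] at key
  rw [key, setIntegral_congr_fun measurableSet_Ioi heq, MeasureTheory.integral_const_mul]
  congr 1
  rw [besselK]
  refine setIntegral_congr_fun measurableSet_Ioi (fun u _ => ?_)
  simp
end

section
/- Let m ∈ ℝ and let β : (0,∞) → ℝ be twice differentiable with −1 < β(r) < 1 for all r > 0, satisfying the second-order equation d/dr [ r·β′(r)/(1−β(r)²) ] = 4·m²·r·β(r)·(1+β(r)²)/(1−β(r)²)² for all r > 0. Then η(r) := (1−β(r))/(1+β(r)) is twice differentiable and strictly positive on (0,∞) and satisfies the Painlevé III equation η″(r) = η′(r)²/η(r) − η′(r)/r + m²·( η(r)³ − 1/η(r) ) for all r > 0. -/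
/-- The Painlevé III equation for `η = (1−β)/(1+β)`: if `β : (0,∞) → (−1,1)` is twice
differentiable and satisfies the deformation equation
`d/dr [rβ′/(1−β²)] = 4m²rβ(1+β²)/(1−β²)²`, then `η` is twice differentiable, strictly
positive, and satisfies `η″ = η′²/η − η′/r + m²(η³ − 1/η)` on `(0,∞)`. -/
theorem stmt19 (m : ℝ) (β : ℝ → ℝ)
    (hdiff : ∀ r : ℝ, 0 < r → DifferentiableAt ℝ β r ∧ DifferentiableAt ℝ (deriv β) r)
    (hrange : ∀ r : ℝ, 0 < r → -1 < β r ∧ β r < 1)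
    (heq : ∀ r : ℝ, 0 < r →
      deriv (fun s => s * deriv β s / (1 - β s ^ 2)) r =
        4 * m ^ 2 * r * β r * (1 + β r ^ 2) / (1 - β r ^ 2) ^ 2) :
    (∀ r : ℝ, 0 < r →
      DifferentiableAt ℝ (fun s => (1 - β s) / (1 + β s)) r ∧
      DifferentiableAt ℝ (deriv fun s => (1 - β s) / (1 + β s)) r) ∧
    (∀ r : ℝ, 0 < r → 0 < (1 - β r) / (1 + β r)) ∧
    ∀ r : ℝ, 0 < r →
      deriv (deriv fun s => (1 - β s) / (1 + β s)) r =
        (deriv (fun s => (1 - β s) / (1 + β s)) r) ^ 2 / ((1 - β r) / (1 + β r)) -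
          deriv (fun s => (1 - β s) / (1 + β s)) r / r +
          m ^ 2 * (((1 - β r) / (1 + β r)) ^ 3 - 1 / ((1 - β r) / (1 + β r))) := by
  -- basic positivity facts
  have hpos1 : ∀ r : ℝ, 0 < r → 0 < 1 + β r := fun r hr => by
    have := (hrange r hr).1; linarith
  have hpos2 : ∀ r : ℝ, 0 < r → 0 < 1 - β r := fun r hr => by
    have := (hrange r hr).2; linarith
  -- derivative of η on (0,∞)
  have hη : ∀ r : ℝ, 0 < r →
      HasDerivAt (fun s => (1 - β s) / (1 + β s))
        (-2 * deriv β r / (1 + β r) ^ 2) r := by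
    intro r hr
    have hb : HasDerivAt β (deriv β r) r := (hdiff r hr).1.hasDerivAt
    have h1 : HasDerivAt (fun s => 1 - β s) (-(deriv β r)) r := by
      simpa using hb.const_sub 1
    have h2 : HasDerivAt (fun s => 1 + β s) (deriv β r) r := by
      simpa using hb.const_add 1
    have hne : (1 + β r) ≠ 0 := (hpos1 r hr).ne'
    have := h1.fun_div h2 hne
    refine this.congr_deriv ?_
    ring
  have hηd : ∀ r : ℝ, 0 < r → deriv (fun s => (1 - β s) / (1 + β s)) r
      = -2 * deriv β r / (1 + β r) ^ 2 := fun r hr => (hη r hr).deriv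
  -- deriv η agrees with g near any r > 0
  have hEv : ∀ r : ℝ, 0 < r →
      deriv (fun s => (1 - β s) / (1 + β s)) =ᶠ[nhds r]
        (fun s => -2 * deriv β s / (1 + β s) ^ 2) := by
    intro r hr
    filter_upwards [isOpen_Ioi.mem_nhds (Set.mem_Ioi.mpr hr)] with s hs
    exact hηd s hs
  -- g is differentiable and its derivative
  have hg : ∀ r : ℝ, 0 < r →
      HasDerivAt (fun s => -2 * deriv β s / (1 + β s) ^ 2)
        ((-2 * deriv (deriv β) r * (1 + β r) ^ 2 -
          (-2 * deriv β r) * (2 * (1 + β r) * deriv β r)) / ((1 + β r) ^ 2) ^ 2) r := by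
    intro r hr
    have hb : HasDerivAt β (deriv β r) r := (hdiff r hr).1.hasDerivAt
    have hb2 : HasDerivAt (deriv β) (deriv (deriv β) r) r := (hdiff r hr).2.hasDerivAt
    have hnum : HasDerivAt (fun s => -2 * deriv β s) (-2 * deriv (deriv β) r) r :=
      hb2.const_mul (-2)
    have h2 : HasDerivAt (fun s => 1 + β s) (deriv β r) r := by
      simpa using hb.const_add 1
    have hden : HasDerivAt (fun s => (1 + β s) ^ 2)
        (2 * (1 + β r) * deriv β r) r := by
      have := h2.fun_pow 2
      simpa [mul_comm, mul_assoc] using this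
    have hne : ((1 + β r) ^ 2) ≠ 0 := pow_ne_zero 2 (hpos1 r hr).ne'
    exact hnum.div hden hne
  refine ⟨?_, ?_, ?_⟩
  · intro r hr
    refine ⟨(hη r hr).differentiableAt, ?_⟩
    exact (Filter.EventuallyEq.differentiableAt_iff (hEv r hr)).mpr (hg r hr).differentiableAt
  · intro r hr
    exact div_pos (hpos2 r hr) (hpos1 r hr)
  · intro r hr
    set b := β r with hb
    set bp := deriv β r with hbp
    set bpp := deriv (deriv β) r with hbpp
    have h1b : (0:ℝ) < 1 + b := hpos1 r hr
    have h2b : (0:ℝ) < 1 - b := hpos2 r hr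
    have hne1 : (1 + b) ≠ 0 := h1b.ne'
    have hne2 : (1 - b) ≠ 0 := h2b.ne'
    have hneq : (1 - b ^ 2) ≠ 0 := by
      intro h
      have : (1 - b) * (1 + b) = 0 := by ring_nf; linarith [h]
      rcases mul_eq_zero.mp this with h | h
      exacts [hne2 h, hne1 h]
    have hrne : r ≠ 0 := hr.ne'
    -- second derivative of η
    have hd2 : deriv (deriv fun s => (1 - β s) / (1 + β s)) r =
        (-2 * bpp * (1 + b) ^ 2 - (-2 * bp) * (2 * (1 + b) * bp)) / ((1 + b) ^ 2) ^ 2 := by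
      rw [Filter.EventuallyEq.deriv_eq (hEv r hr)]
      exact (hg r hr).deriv
    -- relation from heq
    have hF : HasDerivAt (fun s => s * deriv β s / (1 - β s ^ 2))
        (((1 * bp + r * bpp) * (1 - b ^ 2) - (r * bp) * (-(2 * b * bp))) / (1 - b ^ 2) ^ 2) r := by
      have hb' : HasDerivAt β bp r := (hdiff r hr).1.hasDerivAt
      have hb2 : HasDerivAt (deriv β) bpp r := (hdiff r hr).2.hasDerivAt
      have hnum : HasDerivAt (fun s => s * deriv β s) (1 * bp + r * bpp) r := by
        simpa using (hasDerivAt_id' (x := r)).fun_mul hb2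
      have hpow : HasDerivAt (fun s => β s ^ 2) (2 * b * bp) r := by
        have := hb'.fun_pow 2
        simpa [mul_comm, mul_assoc] using this
      have hden : HasDerivAt (fun s => 1 - β s ^ 2) (-(2 * b * bp)) r := by
        simpa using hpow.const_sub 1
      exact hnum.div hden hneq
    have h3 : ((1 * bp + r * bpp) * (1 - b ^ 2) - (r * bp) * (-(2 * b * bp))) / (1 - b ^ 2) ^ 2
        = 4 * m ^ 2 * r * b * (1 + b ^ 2) / (1 - b ^ 2) ^ 2 := by
      rw [← hF.deriv]; exact heq r hr
    have h3' : (bp + r * bpp) * (1 - b ^ 2) + 2 * r * b * bp ^ 2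
        = 4 * m ^ 2 * r * b * (1 + b ^ 2) := by
      have h := h3
      field_simp at h
      linarith [h]
    have hbppval : bpp =
        (4 * m ^ 2 * r * b * (1 + b ^ 2) - bp * (1 - b ^ 2) - 2 * r * b * bp ^ 2)
          / (r * (1 - b ^ 2)) := by
      rw [eq_div_iff (mul_ne_zero hrne hneq)]
      linarith [h3']
    rw [hd2, hηd r hr, hbppval]
    rw [← hb, ← hbp]
    field_simp
    ring
end
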